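/- Antisymmetry of the forms ε_• and ε_∘ on homology: let E be a finite set, σ₀, σ₁ permutations of E, m a perfect matching, ρ_{m,c} = (I − ς_{m,c})^{-1}, and H₁ ⊆ ℤ^E the subgroup generated by differences of perfect matchings. Then for c = 0 and for c = 1, and for all h₁, h₂ ∈ H₁: h₁ᵀ (−I + 2ρ_{m,c}) h₂ = − h₂ᵀ (−I + 2ρ_{m,c}) h₁. -/

import Mathlib

open Finset Matrix

variable {E : Type*}

/-- A perfect matching of `(E, σ₀, σ₁)`: a `{0,1}`-valued function on `E` such that every
cycle (orbit) of `σ₀` and every cycle of `σ₁` contains exactly one element with value `1`. -/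
def IsPerfectMatching (σ₀ σ₁ : Equiv.Perm E) (m : E → ℤ) : Prop :=
  (∀ e, m e = 0 ∨ m e = 1) ∧
  (∀ e, ∃! e', σ₀.SameCycle e e' ∧ m e' = 1) ∧
  (∀ e, ∃! e', σ₁.SameCycle e e' ∧ m e' = 1)

/-- The "broken" permutation matrix `ς_{m,σ}`: the matrix of the permutation `σ`
(with `(σ e, e)`-entry `1`) in which every column `e` with `m e = 1` is replaced by zero. -/
def brokenPermMatrix [DecidableEq E] (σ : Equiv.Perm E) (m : E → ℤ) : Matrix E E ℤ :=
  Matrix.of fun e' e => if e' = σ e ∧ m e = 0 then 1 else 0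

/-- The matrix `ρ_{m,σ} = (I - ς_{m,σ})⁻¹`. -/
noncomputable def rhoMatrix [Fintype E] [DecidableEq E] (σ : Equiv.Perm E) (m : E → ℤ) :
    Matrix E E ℤ :=
  (1 - brokenPermMatrix σ m)⁻¹

/-- The subgroup `H₁ ⊆ ℤ^E` generated by all differences of perfect matchings. -/
def matchingHomology (σ₀ σ₁ : Equiv.Perm E) : AddSubgroup (E → ℤ) :=
  AddSubgroup.closure
    {x | ∃ m' m'', IsPerfectMatching σ₀ σ₁ m' ∧ IsPerfectMatching σ₀ σ₁ m'' ∧ x = m' - m''}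

/-!
Write `ς = ς_{m,σ}`, `ρ = (I - ς)⁻¹` and `C` for the `0/1` matrix of the relation "same `σ`-cycle".
Since every cycle of `σ` is broken at its unique matched element, `ς` is nilpotent. Conjugating
by `I - ς`, both `ρ + ρᵀ - I` and `C` become `I - ς ςᵀ`, the diagonal indicator of `σ(m⁻¹(1))`;
hence `ρ + ρᵀ = I + C` and `(-I + 2ρ) + (-I + 2ρ)ᵀ = 2C`. Finally `C` annihilates `H₁`, because
`C m'` is the all-ones vector for every perfect matching `m'`.
-/

def cycMatrix [Fintype E] [DecidableEq E] (σ : Equiv.Perm E) : Matrix E E ℤ :=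
  Matrix.of fun e' e => if σ.SameCycle e' e then 1 else 0

def IsCycleTransversal (σ : Equiv.Perm E) (m : E → ℤ) : Prop :=
  ∀ e, ∃! e', σ.SameCycle e e' ∧ m e' = 1

theorem IsCycleTransversal.eq_of_sameCycle {σ : Equiv.Perm E} {m : E → ℤ}
    (hm : IsCycleTransversal σ m) (h01 : ∀ e, m e = 0 ∨ m e = 1) {a b : E}
    (hab : σ.SameCycle a b) (ha : m a ≠ 0) (hb : m b ≠ 0) : a = b := by
  obtain ⟨u, -, hu⟩ := hm a
  exact (hu a ⟨.refl _ _, (h01 a).resolve_left ha⟩).trans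
    (hu b ⟨hab, (h01 b).resolve_left hb⟩).symm

theorem Matrix.dotProduct_mulVec_eq_neg_of_add_transpose_mulVec_eq_zero {n R : Type*}
    [Fintype n] [CommRing R] (A : Matrix n n R) (x y : n → R) (h : (A + Aᵀ) *ᵥ y = 0) :
    x ⬝ᵥ A *ᵥ y = -(y ⬝ᵥ A *ᵥ x) := by
  rw [eq_neg_iff_add_eq_zero, dotProduct_mulVec y, ← mulVec_transpose, dotProduct_comm _ x,
    ← dotProduct_add, ← add_mulVec, h, dotProduct_zero]

section BrokenPermMatrix

variable [Fintype E] [DecidableEq E] (σ : Equiv.Perm E) (m : E → ℤ)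

theorem brokenPermMatrix_mul_apply (X : Matrix E E ℤ) (e' e : E) :
    (brokenPermMatrix σ m * X) e' e = if m (σ.symm e') = 0 then X (σ.symm e') e else 0 := by
  rw [mul_apply, Finset.sum_eq_single (σ.symm e')]
  · simp [brokenPermMatrix, ite_mul]
  · intro f _ hf
    simp [brokenPermMatrix, show e' ≠ σ f by rintro rfl; simp at hf]
  · simp

theorem mul_brokenPermMatrix_apply (X : Matrix E E ℤ) (e' e : E) :
    (X * brokenPermMatrix σ m) e' e = if m e = 0 then X e' (σ e) else 0 := by
  rw [mul_apply, Finset.sum_eq_single (σ e)]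
  · simp [brokenPermMatrix, mul_ite]
  · intro f _ hf
    simp [brokenPermMatrix, hf]
  · simp

theorem mul_transpose_brokenPermMatrix_apply (X : Matrix E E ℤ) (e' e : E) :
    (X * (brokenPermMatrix σ m)ᵀ) e' e = if m (σ.symm e) = 0 then X e' (σ.symm e) else 0 := by
  rw [← transpose_transpose X, ← transpose_mul, transpose_apply, brokenPermMatrix_mul_apply]
  rfl

theorem brokenPermMatrix_pow_apply_ne_zero {k : ℕ} {e' e : E}
    (h : (brokenPermMatrix σ m ^ k) e' e ≠ 0) : ∀ j < k, m ((σ ^ j) e) = 0 := by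
  induction k generalizing e with
  | zero => simp
  | succ k ih =>
    rw [pow_succ, mul_brokenPermMatrix_apply] at h
    split_ifs at h with he
    · intro j hj
      cases j with
      | zero => simpa using he
      | succ j => simpa [pow_succ] using ih h j (by omega)
    · exact absurd rfl h

theorem isNilpotent_brokenPermMatrix (hm : ∀ e, ∃ e', σ.SameCycle e e' ∧ m e' ≠ 0) :
    IsNilpotent (brokenPermMatrix σ m) := by
  refine ⟨orderOf σ, ?_⟩
  ext e' e
  by_contra h
  obtain ⟨u, hu, hmu⟩ := hm e
  obtain ⟨i, hi, rfl⟩ := hu.exists_pow_eq'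
  exact hmu (brokenPermMatrix_pow_apply_ne_zero σ m h i hi)

theorem one_sub_brokenPermMatrix_mul_cycMatrix_mul_transpose
    (hm : IsCycleTransversal σ m) (h01 : ∀ e, m e = 0 ∨ m e = 1) :
    (1 - brokenPermMatrix σ m) * cycMatrix σ * (1 - brokenPermMatrix σ m)ᵀ =
      1 - brokenPermMatrix σ m * (brokenPermMatrix σ m)ᵀ := by
  set S := brokenPermMatrix σ m
  have expand : (1 - S) * cycMatrix σ * (1 - S)ᵀ =
      cycMatrix σ - S * cycMatrix σ - cycMatrix σ * Sᵀ + S * cycMatrix σ * Sᵀ := by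
    rw [transpose_sub, transpose_one]
    noncomm_ring
  rw [expand]
  ext e' e
  simp only [Matrix.sub_apply, Matrix.add_apply, S, brokenPermMatrix_mul_apply,
    mul_transpose_brokenPermMatrix_apply]
  simp only [brokenPermMatrix, cycMatrix, one_apply, of_apply, Equiv.apply_symm_apply,
    Equiv.Perm.sameCycle_symm_apply_left, Equiv.Perm.sameCycle_symm_apply_right]
  by_cases hee : e' = e
  · subst hee
    split_ifs <;> simp_all [Equiv.Perm.SameCycle.refl]
  · have hmatched : σ.SameCycle e' e → m (σ.symm e') = 0 ∨ m (σ.symm e) = 0 := fun hc => by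
      by_contra! h
      exact hee (σ.symm.injective (hm.eq_of_sameCycle h01 (by simpa using hc) h.1 h.2))
    split_ifs <;> simp_all

end BrokenPermMatrix

section Rho

variable [Fintype E] [DecidableEq E] {σ : Equiv.Perm E} {m : E → ℤ}

theorem rhoMatrix_add_transpose (hm : IsCycleTransversal σ m) (h01 : ∀ e, m e = 0 ∨ m e = 1) :
    rhoMatrix σ m + (rhoMatrix σ m)ᵀ = 1 + cycMatrix σ := by
  set S := brokenPermMatrix σ m
  set ρ := rhoMatrix σ m
  have hunit : IsUnit (1 - S) := (isNilpotent_brokenPermMatrix σ m fun e =>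
    (hm e).exists.imp fun _ ⟨hc, h1⟩ => ⟨hc, h1 ▸ one_ne_zero⟩).isUnit_one_sub
  have hdet : IsUnit (1 - S).det := (isUnit_iff_isUnit_det _).mp hunit
  have hl : (1 - S) * ρ = 1 := mul_nonsing_inv _ hdet
  have hlT : ρᵀ * (1 - S)ᵀ = 1 := by rw [← transpose_mul, hl, transpose_one]
  have key : (1 - S) * (ρ + ρᵀ - 1) * (1 - S)ᵀ = (1 - S) * cycMatrix σ * (1 - S)ᵀ :=
    calc (1 - S) * (ρ + ρᵀ - 1) * (1 - S)ᵀ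
        = (1 - S) * ρ * (1 - S)ᵀ + (1 - S) * (ρᵀ * (1 - S)ᵀ) - (1 - S) * (1 - S)ᵀ := by
          noncomm_ring
      _ = (1 - S)ᵀ + (1 - S) - (1 - S) * (1 - S)ᵀ := by rw [hl, hlT, one_mul, mul_one]
      _ = 1 - S * Sᵀ := by rw [transpose_sub, transpose_one]; noncomm_ring
      _ = (1 - S) * cycMatrix σ * (1 - S)ᵀ :=
          (one_sub_brokenPermMatrix_mul_cycMatrix_mul_transpose σ m hm h01).symm
  have hunitT : IsUnit (1 - S)ᵀ := (isUnit_transpose _).mpr hunit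
  exact sub_eq_iff_eq_add'.mp (hunit.mul_left_cancel (hunitT.mul_right_cancel key))

theorem neg_one_add_two_smul_rhoMatrix_add_transpose (hm : IsCycleTransversal σ m)
    (h01 : ∀ e, m e = 0 ∨ m e = 1) :
    (-1 + 2 • rhoMatrix σ m : Matrix E E ℤ) + (-1 + 2 • rhoMatrix σ m)ᵀ = 2 • cycMatrix σ :=
  calc (-1 + 2 • rhoMatrix σ m : Matrix E E ℤ) + (-1 + 2 • rhoMatrix σ m)ᵀ
      = 2 • (-1 + (rhoMatrix σ m + (rhoMatrix σ m)ᵀ)) := by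
        rw [transpose_add, transpose_neg, transpose_one, transpose_smul]
        abel
    _ = 2 • cycMatrix σ := by rw [rhoMatrix_add_transpose hm h01, neg_add_cancel_left]

theorem cycMatrix_mulVec_of_isCycleTransversal (hm : IsCycleTransversal σ m)
    (h01 : ∀ e, m e = 0 ∨ m e = 1) : cycMatrix σ *ᵥ m = 1 := by
  funext e₀
  obtain ⟨u, ⟨hcyc, hmu⟩, huniq⟩ := hm e₀
  rw [mulVec, dotProduct, Finset.sum_eq_single u]
  · simp [cycMatrix, hcyc, hmu]
  · intro e _ hne
    rcases h01 e with h0 | h1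
    · simp [h0]
    · have hc : ¬ σ.SameCycle e₀ e := fun hc => hne (huniq e ⟨hc, h1⟩)
      simp [cycMatrix, hc]
  · simp

theorem cycMatrix_mulVec_eq_zero_of_mem_matchingHomology {σ₀ σ₁ : Equiv.Perm E}
    (hσ : ∀ m', IsPerfectMatching σ₀ σ₁ m' → IsCycleTransversal σ m') {h : E → ℤ}
    (hh : h ∈ matchingHomology σ₀ σ₁) : cycMatrix σ *ᵥ h = 0 := by
  have hle : matchingHomology σ₀ σ₁ ≤ (LinearMap.ker (cycMatrix σ).mulVecLin).toAddSubgroup := by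
    refine AddSubgroup.closure_le _ |>.mpr ?_
    rintro _ ⟨m', m'', hm', hm'', rfl⟩
    simp [mulVec_sub, cycMatrix_mulVec_of_isCycleTransversal (hσ m' hm') hm'.1,
      cycMatrix_mulVec_of_isCycleTransversal (hσ m'' hm'') hm''.1]
  simpa using hle hh

end Rho

theorem epsBlack_epsWhite_antisymm_general [Fintype E] [DecidableEq E]
    (σ₀ σ₁ : Equiv.Perm E) (m : E → ℤ) (hm : IsPerfectMatching σ₀ σ₁ m)
    (h₁ h₂ : E → ℤ)
    (hh₂ : h₂ ∈ matchingHomology σ₀ σ₁) :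
    (h₁ ⬝ᵥ (-1 + 2 • rhoMatrix σ₀ m).mulVec h₂ =
      -(h₂ ⬝ᵥ (-1 + 2 • rhoMatrix σ₀ m).mulVec h₁)) ∧
    (h₁ ⬝ᵥ (-1 + 2 • rhoMatrix σ₁ m).mulVec h₂ =
      -(h₂ ⬝ᵥ (-1 + 2 • rhoMatrix σ₁ m).mulVec h₁)) := by
  obtain ⟨h01, hm₀, hm₁⟩ := hm
  have antisymm (σ : Equiv.Perm E) (hmσ : IsCycleTransversal σ m)
      (hσ : ∀ m', IsPerfectMatching σ₀ σ₁ m' → IsCycleTransversal σ m') :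
      h₁ ⬝ᵥ (-1 + 2 • rhoMatrix σ m) *ᵥ h₂ = -(h₂ ⬝ᵥ (-1 + 2 • rhoMatrix σ m) *ᵥ h₁) := by
    apply dotProduct_mulVec_eq_neg_of_add_transpose_mulVec_eq_zero
    rw [neg_one_add_two_smul_rhoMatrix_add_transpose hmσ h01, smul_mulVec,
      cycMatrix_mulVec_eq_zero_of_mem_matchingHomology hσ hh₂, smul_zero]
  exact ⟨antisymm σ₀ hm₀ fun _ h => h.2.1, antisymm σ₁ hm₁ fun _ h => h.2.2⟩

/-- Antisymmetry on `H₁` of the forms `ε_•` and `ε_∘` given by `-I + 2 ρ_{m,c}`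
for `c = 0` and `c = 1`. -/
theorem epsBlack_epsWhite_antisymm [Fintype E] [DecidableEq E]
    (σ₀ σ₁ : Equiv.Perm E) (m : E → ℤ) (hm : IsPerfectMatching σ₀ σ₁ m)
    (h₁ h₂ : E → ℤ)
    (hh₁ : h₁ ∈ matchingHomology σ₀ σ₁) (hh₂ : h₂ ∈ matchingHomology σ₀ σ₁) :
    (h₁ ⬝ᵥ (-1 + 2 • rhoMatrix σ₀ m).mulVec h₂ =
      -(h₂ ⬝ᵥ (-1 + 2 • rhoMatrix σ₀ m).mulVec h₁)) ∧
    (h₁ ⬝ᵥ (-1 + 2 • rhoMatrix σ₁ m).mulVec h₂ =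
      -(h₂ ⬝ᵥ (-1 + 2 • rhoMatrix σ₁ m).mulVec h₁)) :=
  epsBlack_epsWhite_antisymm_general σ₀ σ₁ m hm h₁ h₂ hh₂
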